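/- Let ≺ be a structured linear order on the vertices of T_φ whose extracted assignment falsifies at least one clause of φ. Then the feedback arc set implied by ≺ has size at least n·s₁² + (3n−1)m·s₁·s₂ + s₁·s₂. -/

import Mathlib

/-! ### The tournament `T_φ` of the reduction

A CNF formula `φ` with variables `x_1, …, x_n` and clauses `c_1, …, c_m` in which no
variable occurs twice in a clause is given by its occurrence function
`occ : Fin n → Fin m → Option Bool`, where `occ i j = some true` (resp. `some false`)
means `x_i` occurs positively (resp. negatively) in `c_j`, and `none` means `x_i`
does not occur in `c_j`. -/

/-- The names of the `6n + m` modules of the tournament `T_φ`. -/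
inductive ModName (n m : ℕ) : Type where
  | A : Fin n → ModName n m
  | B : Fin n → ModName n m
  | C : Fin n → ModName n m
  | D : Fin n → ModName n m
  | E : Fin n → ModName n m
  | F : Fin n → ModName n m
  | T : Fin m → ModName n m
  deriving DecidableEq, Fintype

/-- The group (variable index) of a module, if it is a variable module. -/
def grp? {n m : ℕ} : ModName n m → Option (Fin n)
  | .A i => some i
  | .B i => some i
  | .C i => some i
  | .D i => some i
  | .E i => some i
  | .F i => some i
  | .T _ => none

/-- The clause index of a module, if it is a clause module. -/
def clause? {n m : ℕ} : ModName n m → Option (Fin m)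
  | .T j => some j
  | _ => none

/-- The rank of a module within its group: `A = 0, B = 1, C = 2, D = 3, E = 4, F = 5`. -/
def rk {n m : ℕ} : ModName n m → ℕ
  | .A _ => 0
  | .B _ => 1
  | .C _ => 2
  | .D _ => 3
  | .E _ => 4
  | .F _ => 5
  | .T _ => 6

/-- The size of each module: `A_i, B_i, C_i, D_i, F_i` have size `s₁`; `E_i` has size
`s₁ + 2` for `i < n` and `s₁ + 3` for `i = n` (i.e. index `n - 1`); `T_j` has size `s₂`. -/
def msize (n m s₁ s₂ : ℕ) : ModName n m → ℕ
  | .A _ => s₁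
  | .B _ => s₁
  | .C _ => s₁
  | .D _ => s₁
  | .E i => if (i : ℕ) = n - 1 then s₁ + 3 else s₁ + 2
  | .F _ => s₁
  | .T _ => s₂

/-- The vertex set of `T_φ`: a vertex is a module name together with an index inside
the module. -/
abbrev Vtx (n m s₁ s₂ : ℕ) : Type := Σ M : ModName n m, Fin (msize n m s₁ s₂ M)

/-- Whether all arcs go from `T_j` to the variable module of rank `r` of a group `i`
with `occ i j = o`: if `x_i` does not occur in `c_j`, `T_j` beats `A_i ∪ B_i ∪ C_i`
(ranks 0,1,2); if positively, `T_j` beats `A_i ∪ B_i ∪ F_i` (ranks 0,1,5); if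
negatively, `T_j` beats `A_i ∪ C_i ∪ D_i` (ranks 0,2,3). -/
def tBeats : Option Bool → ℕ → Prop
  | none, r => r = 0 ∨ r = 1 ∨ r = 2
  | some true, r => r = 0 ∨ r = 1 ∨ r = 5
  | some false, r => r = 0 ∨ r = 2 ∨ r = 3

/-- The direction of the arcs between two distinct modules of `T_φ`. -/
def modArc {n m : ℕ} (occ : Fin n → Fin m → Option Bool) (M M' : ModName n m) : Prop :=
  (∃ i i' : Fin n, grp? M = some i ∧ grp? M' = some i' ∧
    (i < i' ∨ (i = i' ∧ ((rk M < rk M' ∧ ¬(rk M = 3 ∧ rk M' = 5)) ∨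
      (rk M = 5 ∧ rk M' = 3))))) ∨
  (∃ j j' : Fin m, clause? M = some j ∧ clause? M' = some j' ∧ j < j') ∨
  (∃ j : Fin m, ∃ i : Fin n, clause? M = some j ∧ grp? M' = some i ∧
    tBeats (occ i j) (rk M')) ∨
  (∃ i : Fin n, ∃ j : Fin m, grp? M = some i ∧ clause? M' = some j ∧
    ¬ tBeats (occ i j) (rk M))

/-- The arc relation of the tournament `T_φ`: inside a module, arcs follow the
transitive order of the indices; between distinct modules, arcs are given by `modArc`. -/
def arc {n m s₁ s₂ : ℕ} (occ : Fin n → Fin m → Option Bool) :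
    Vtx n m s₁ s₂ → Vtx n m s₁ s₂ → Prop :=
  fun u v => (u.1 = v.1 ∧ (u.2 : ℕ) < (v.2 : ℕ)) ∨ (u.1 ≠ v.1 ∧ modArc occ u.1 v.1)

/-- The set of vertices of a module. -/
def mset {n m s₁ s₂ : ℕ} (M : ModName n m) : Set (Vtx n m s₁ s₂) := {v | v.1 = M}

/-- The set of vertices of group `i`: `A_i ∪ B_i ∪ C_i ∪ D_i ∪ E_i ∪ F_i`. -/
def gset {n m s₁ s₂ : ℕ} (i : Fin n) : Set (Vtx n m s₁ s₂) := {v | grp? v.1 = some i}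

/-- The sink of the transitive tournament induced by the module `F_n`. -/
def fnSink (n m s₁ s₂ : ℕ) (hn : 0 < n) (hs₁ : 0 < s₁) : Vtx n m s₁ s₂ :=
  ⟨.F ⟨n - 1, Nat.sub_lt hn one_pos⟩, ⟨s₁ - 1, Nat.sub_lt hs₁ one_pos⟩⟩

/-- The feedback arc set implied by an ordering `r`. -/
def fasSet {V : Type*} (A r : V → V → Prop) : Set (V × V) := {p | A p.1 p.2 ∧ r p.2 p.1}

/-- `r` is an optimal ordering: a strict linear order whose implied feedback arc set
has minimum size. -/
def IsOptimalOrder {V : Type*} (A r : V → V → Prop) : Prop :=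
  IsStrictTotalOrder V r ∧
    ∀ r' : V → V → Prop, IsStrictTotalOrder V r' → (fasSet A r).ncard ≤ (fasSet A r').ncard

/-- `r` places `v` last. -/
def PlacesLast {V : Type*} (r : V → V → Prop) (v : V) : Prop := ∀ u, u ≠ v → r u v

/-- `v` is a Slater winner: some optimal order places `v` last. -/
def SlaterWinner {V : Type*} (A : V → V → Prop) (v : V) : Prop :=
  ∃ r : V → V → Prop, IsOptimalOrder A r ∧ PlacesLast r v

/-- The assignment `σ` satisfies clause `c_j`. -/
def SatClause {n m : ℕ} (occ : Fin n → Fin m → Option Bool) (σ : Fin n → Bool)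
    (j : Fin m) : Prop :=
  ∃ i : Fin n, (occ i j = some true ∧ σ i = true) ∨ (occ i j = some false ∧ σ i = false)

/-- The assignment `σ` satisfies `φ`. -/
def Sat {n m : ℕ} (occ : Fin n → Fin m → Option Bool) (σ : Fin n → Bool) : Prop :=
  ∀ j : Fin m, SatClause occ σ j

/-- The weight of a truth assignment: the number of variables set to `true`. -/
def wt {n : ℕ} (σ : Fin n → Bool) : ℕ := (Finset.univ.filter (fun i => σ i = true)).card

/-- Every element of `S` comes before every element of `S'` in the order `r`. -/
def Before {V : Type*} (r : V → V → Prop) (S S' : Set V) : Prop := ∀ u ∈ S, ∀ v ∈ S', r u v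

/-- `S` is contiguous in the ordering `r`. -/
def Contig {V : Type*} (r : V → V → Prop) (S : Set V) : Prop :=
  ¬ ∃ x ∈ S, ∃ y ∈ S, ∃ z, z ∉ S ∧ r x z ∧ r z y

/-- A linear order on the vertices of `T_φ` is structured if every module is contiguous,
groups appear in increasing order, within each group `A_i ≺ B_i ≺ C_i` come before
`D_i ∪ E_i ∪ F_i`, and the last three modules appear in one of the cyclic orders
`D_i ≺ E_i ≺ F_i`, `E_i ≺ F_i ≺ D_i`, `F_i ≺ D_i ≺ E_i`. -/
def Structured {n m s₁ s₂ : ℕ} (r : Vtx n m s₁ s₂ → Vtx n m s₁ s₂ → Prop) : Prop :=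
  (∀ M : ModName n m, Contig r (mset M)) ∧
  (∀ i i' : Fin n, i < i' → Before r (gset i) (gset i')) ∧
  (∀ i : Fin n,
    Before r (mset (.A i)) (mset (.B i)) ∧
    Before r (mset (.B i)) (mset (.C i)) ∧
    Before r (mset (.A i) ∪ mset (.B i) ∪ mset (.C i))
      (mset (.D i) ∪ mset (.E i) ∪ mset (.F i))) ∧
  (∀ i : Fin n,
    (Before r (mset (.D i)) (mset (.E i)) ∧ Before r (mset (.E i)) (mset (.F i))) ∨
    (Before r (mset (.E i)) (mset (.F i)) ∧ Before r (mset (.F i)) (mset (.D i))) ∨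
    (Before r (mset (.F i)) (mset (.D i)) ∧ Before r (mset (.D i)) (mset (.E i))))

/-- `σ` is the assignment extracted from the structured order `r`: `x_i` is set to true
iff `D_i ≺ E_i ≺ F_i`. -/
def Extracted {n m s₁ s₂ : ℕ} (r : Vtx n m s₁ s₂ → Vtx n m s₁ s₂ → Prop)
    (σ : Fin n → Bool) : Prop :=
  ∀ i : Fin n, σ i = true ↔
    (Before r (mset (.D i)) (mset (.E i)) ∧ Before r (mset (.E i)) (mset (.F i)))

/-! In each group the arcs from the last to the first of `D_i, E_i, F_i` point backwards,
which costs `s₁²` per group. The six modules of a group appear in a fixed order, and a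
finite check over the three layouts, the three kinds of occurrence and the seven positions
of a clause module `T_j` relative to them shows that at least two of these modules form a
backward `s₁ × s₂` block with `T_j`, and at least three unless `T_j` sits strictly inside the
group and the literal of `x_i` in `c_j` is true. Since the groups follow each other, `T_j` sits
strictly inside at most one group; so every clause costs at least `3n − 1` blocks, and a
falsified clause `3n`. -/

open Finset

section Order

variable {V : Type*} {r : V → V → Prop}

lemma Before.trans (hr : IsStrictTotalOrder V r) {S S' S'' : Set V} (h : Before r S S')
    (h' : Before r S' S'') (hne : S'.Nonempty) : Before r S S'' := by
  obtain ⟨w, hw⟩ := hne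
  exact fun u hu v hv => hr.trans u w v (h u hu w hw) (h' w hw v hv)

lemma Before.not_before (hr : IsStrictTotalOrder V r) {S S' : Set V} (h : Before r S S')
    (hS : S.Nonempty) (hS' : S'.Nonempty) : ¬ Before r S' S := by
  obtain ⟨u, hu⟩ := hS
  obtain ⟨v, hv⟩ := hS'
  exact fun h' => hr.irrefl u (hr.trans _ _ _ (h u hu v hv) (h' v hv u hu))

lemma before_of_lt_of_before_succ (hr : IsStrictTotalOrder V r) {k : ℕ}
    (f : Fin (k + 1) → Set V) (hne : ∀ t, (f t).Nonempty)
    (hsucc : ∀ t : Fin k, Before r (f t.castSucc) (f t.succ)) :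
    ∀ t t', t < t' → Before r (f t) (f t') := by
  intro t t'
  induction t' using Fin.induction with
  | zero => exact fun h => absurd h (Fin.not_lt_zero t)
  | succ s ih =>
    intro h
    rcases (Fin.le_castSucc_iff.mpr h).lt_or_eq with h | rfl
    · exact (ih h).trans hr (hsucc s) (hne _)
    · exact hsucc s

lemma before_or_before_of_contig (hr : IsStrictTotalOrder V r) {S S' : Set V}
    (hS : Contig r S) (hS' : Contig r S') (hdisj : Disjoint S S') :
    Before r S S' ∨ Before r S' S := by
  have lt_of_not_lt {u v : V} (hu : u ∈ S) (hv : v ∈ S') (h : ¬ r u v) : r v u :=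
    (trichotomous_of r u v).resolve_left h |>.resolve_left
      (fun he => hdisj.ne_of_mem hu hv he)
  by_contra! h
  simp only [Before, not_forall] at h
  obtain ⟨⟨u, hu, v, hv, huv⟩, ⟨v', hv', u', hu', hvu'⟩⟩ := h
  have hvu := lt_of_not_lt hu hv huv
  have hu'v' : r u' v' := by
    by_contra h'
    exact hvu' (lt_of_not_lt hu' hv' h')
  rcases trichotomous_of r u' v with h | h | h
  · exact hS ⟨u', hu', u, hu, v, hdisj.notMem_of_mem_right hv, h, hvu⟩
  · exact hdisj.ne_of_mem hu' hv h
  · exact hS' ⟨v, hv, v', hv', u', hdisj.notMem_of_mem_left hu', h, hu'v'⟩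

end Order

lemma three_mul_card_sub_one_le_sum {ι : Type*} [Fintype ι] [DecidableEq ι] (f : ι → ℕ)
    (h2 : ∀ i, 2 ≤ f i) (h3 : ∀ i i', i ≠ i' → 3 ≤ f i ∨ 3 ≤ f i') :
    3 * Fintype.card ι - 1 ≤ ∑ i, f i := by
  by_cases hall : ∀ i, 3 ≤ f i
  · have := card_nsmul_le_sum univ (fun i => f i) 3 (fun i _ => hall i)
    simp only [card_univ, smul_eq_mul] at this
    omega
  · push Not at hall
    obtain ⟨i₀, hi₀⟩ := hall
    have hrest := card_nsmul_le_sum (univ.erase i₀) (fun i => f i) 3 fun i hi =>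
      (h3 i i₀ (ne_of_mem_erase hi)).resolve_right (by omega)
    rw [← add_sum_erase _ _ (mem_univ i₀)]
    simp only [card_erase_of_mem (mem_univ i₀), card_univ, smul_eq_mul] at hrest
    have := h2 i₀
    omega

section Tournament

variable {n m s₁ s₂ : ℕ} {occ : Fin n → Fin m → Option Bool}
  {r : Vtx n m s₁ s₂ → Vtx n m s₁ s₂ → Prop}

def IsBackwardPair (occ : Fin n → Fin m → Option Bool)
    (r : Vtx n m s₁ s₂ → Vtx n m s₁ s₂ → Prop) (p : ModName n m × ModName n m) : Prop :=
  p.1 ≠ p.2 ∧ modArc occ p.1 p.2 ∧ Before r (mset p.2) (mset p.1)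

open Classical in
lemma sum_backwardPair_le_ncard_fasSet :
    ∑ p with IsBackwardPair occ r p, msize n m s₁ s₂ p.1 * msize n m s₁ s₂ p.2 ≤
      (fasSet (arc occ) r).ncard := by
  let vtxPair :
      (Σ p : ModName n m × ModName n m, Fin (msize n m s₁ s₂ p.1) × Fin (msize n m s₁ s₂ p.2)) →
        Vtx n m s₁ s₂ × Vtx n m s₁ s₂ :=
    fun q => (⟨q.1.1, q.2.1⟩, ⟨q.1.2, q.2.2⟩)
  have hinj : Function.Injective vtxPair := by
    rintro ⟨⟨a, b⟩, x, y⟩ ⟨⟨a', b'⟩, x', y'⟩ h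
    simp only [vtxPair, Prod.mk.injEq, Sigma.mk.inj_iff] at h
    obtain ⟨⟨rfl, hx⟩, rfl, hy⟩ := h
    rw [heq_iff_eq] at hx hy
    rw [hx, hy]
  calc ∑ p with IsBackwardPair occ r p, msize n m s₁ s₂ p.1 * msize n m s₁ s₂ p.2
      = ((univ.filter (IsBackwardPair occ r)).sigma fun _ => univ).card := by
        simp [card_sigma]
    _ = (((univ.filter (IsBackwardPair occ r)).sigma fun _ => univ).map ⟨vtxPair, hinj⟩).card :=
        (card_map _).symm
    _ ≤ (fasSet (arc occ) r).ncard := by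
        rw [← Set.ncard_coe_finset]
        refine Set.ncard_le_ncard ?_ (Set.toFinite _)
        rintro _ hq
        simp only [coe_map, Set.mem_image, mem_coe, mem_sigma, mem_filter, mem_univ,
          true_and, and_true] at hq
        obtain ⟨⟨p, x, y⟩, ⟨hne, harc, hbef⟩, rfl⟩ := hq
        exact ⟨Or.inr ⟨hne, harc⟩, hbef _ rfl _ rfl⟩

end Tournament

lemma mem_iff_lt_card_of_downward_closed : ∀ S : Finset (Fin 6),
    (∀ t ∈ S, ∀ t' ≤ t, t' ∈ S) → ∀ t, t ∈ S ↔ (t : ℕ) < #S := by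
  decide

instance (o : Option Bool) (q : ℕ) : Decidable (tBeats o q) := by
  rcases o with _ | _ | _ <;> unfold tBeats <;> infer_instance

/-- The rank of the module in position `t` of a group laid out in the `c`-th of the three
orders `D E F`, `E F D`, `F D E` allowed by a structured order. -/
def slotRank (c : Fin 3) : Fin 6 → Fin 6 :=
  ![![0, 1, 2, 3, 4, 5], ![0, 1, 2, 4, 5, 3], ![0, 1, 2, 5, 3, 4]] c

lemma slotRank_injective : ∀ c, Function.Injective (slotRank c) := by
  decide

/-- The positions `t` of a group whose module forms a backward pair with a clause module
placed right after the first `k` positions, when the variable occurs in the clause as `o`. -/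
def backwardSlots (o : Option Bool) (c : Fin 3) (k : ℕ) : Finset (Fin 6) :=
  {t | if (t : ℕ) < k then tBeats o (slotRank c t) else ¬ tBeats o (slotRank c t)}

/-- `o = some (decide (c = 0))` says that the literal is true under the value the layout `c`
gives to the variable. -/
lemma two_le_card_backwardSlots (o : Option Bool) (c : Fin 3) (k : Fin 7) :
    2 ≤ #(backwardSlots o c k) ∧ (3 ≤ #(backwardSlots o c k) ∨
      o = some (decide (c = 0)) ∧ 0 < (k : ℕ) ∧ (k : ℕ) < 6) := by
  revert o c k
  decide

section Layout

variable {n m s₁ s₂ : ℕ} {r : Vtx n m s₁ s₂ → Vtx n m s₁ s₂ → Prop} {i : Fin n} {j : Fin m}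

def groupMod (i : Fin n) (q : Fin 6) : ModName n m := ![.A i, .B i, .C i, .D i, .E i, .F i] q

lemma grp?_groupMod (q : Fin 6) : grp? (groupMod (m := m) i q) = some i := by
  fin_cases q <;> rfl

lemma clause?_groupMod (q : Fin 6) : clause? (groupMod (m := m) i q) = none := by
  fin_cases q <;> rfl

lemma rk_groupMod (q : Fin 6) : rk (groupMod (m := m) i q) = q := by
  fin_cases q <;> rfl

lemma groupMod_ne_T (q : Fin 6) : groupMod i q ≠ .T j := by
  fin_cases q <;> simp [groupMod]

lemma le_msize_groupMod (q : Fin 6) : s₁ ≤ msize n m s₁ s₂ (groupMod i q) := by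
  fin_cases q <;> simp [groupMod, msize]
  split <;> omega

lemma mset_nonempty (hs₁ : 0 < s₁) (hs₂ : 0 < s₂) (M : ModName n m) :
    (mset M : Set (Vtx n m s₁ s₂)).Nonempty := by
  have : 0 < msize n m s₁ s₂ M := by
    cases M <;> simp only [msize] <;> first | omega | (split <;> omega)
  exact ⟨⟨M, ⟨0, this⟩⟩, rfl⟩

def slotMod (i : Fin n) (c : Fin 3) (t : Fin 6) : ModName n m := groupMod i (slotRank c t)

lemma slotMod_injective (c : Fin 3) : Function.Injective (slotMod (m := m) i c) := by
  intro t t' h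
  have h' := congrArg rk h
  simp only [slotMod, rk_groupMod, Fin.val_inj] at h'
  exact slotRank_injective c h'

lemma mset_slotMod_subset_gset (c : Fin 3) (t : Fin 6) :
    (mset (slotMod i c t) : Set (Vtx n m s₁ s₂)) ⊆ gset i :=
  fun u (hu : u.1 = _) => show grp? u.1 = some i from hu ▸ grp?_groupMod _

def LaidOut (r : Vtx n m s₁ s₂ → Vtx n m s₁ s₂ → Prop) (i : Fin n) (c : Fin 3) : Prop :=
  ∀ t t' : Fin 6, t < t' → Before r (mset (slotMod i c t)) (mset (slotMod i c t'))

lemma Structured.exists_laidOut (hr : IsStrictTotalOrder _ r) (hs₁ : 0 < s₁) (hs₂ : 0 < s₂)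
    (hstr : Structured r) (i : Fin n) : ∃ c, LaidOut r i c := by
  obtain ⟨hAB, hBC, hABC⟩ := hstr.2.2.1 i
  have hCD : Before r (mset (.C i)) (mset (.D i)) := fun u hu v hv =>
    hABC u (.inr hu) v (.inl (.inl hv))
  have hCE : Before r (mset (.C i)) (mset (.E i)) := fun u hu v hv =>
    hABC u (.inr hu) v (.inl (.inr hv))
  have hCF : Before r (mset (.C i)) (mset (.F i)) := fun u hu v hv =>
    hABC u (.inr hu) v (.inr hv)
  suffices ∃ c, ∀ t : Fin 5,
      Before r (mset (slotMod i c t.castSucc)) (mset (slotMod i c t.succ)) by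
    obtain ⟨c, hc⟩ := this
    exact ⟨c, before_of_lt_of_before_succ hr _ (fun _ => mset_nonempty hs₁ hs₂ _) hc⟩
  rcases hstr.2.2.2 i with ⟨hDE, hEF⟩ | ⟨hEF, hFD⟩ | ⟨hFD, hDE⟩
  · exact ⟨0, fun t => by fin_cases t <;> assumption⟩
  · exact ⟨1, fun t => by fin_cases t <;> assumption⟩
  · exact ⟨2, fun t => by fin_cases t <;> assumption⟩

lemma LaidOut.eq_zero_iff (hr : IsStrictTotalOrder _ r) (hs₁ : 0 < s₁) (hs₂ : 0 < s₂)
    {c : Fin 3} (hc : LaidOut r i c) :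
    c = 0 ↔ Before r (mset (.D i)) (mset (.E i)) ∧ Before r (mset (.E i)) (mset (.F i)) := by
  constructor
  · rintro rfl
    exact ⟨hc 3 4 (by decide), hc 4 5 (by decide)⟩
  · rintro ⟨hDE, hEF⟩
    by_contra hc0
    have hFD : Before r (mset (.F i)) (mset (.D i)) := by
      fin_cases c
      · exact absurd rfl hc0
      · exact hc 4 5 (by decide)
      · exact hc 3 4 (by decide)
    exact (hDE.trans hr hEF (mset_nonempty hs₁ hs₂ _)).not_before hr
      (mset_nonempty hs₁ hs₂ _) (mset_nonempty hs₁ hs₂ _) hFD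

end Layout

section Clause

variable {n m s₁ s₂ : ℕ} {occ : Fin n → Fin m → Option Bool}
  {r : Vtx n m s₁ s₂ → Vtx n m s₁ s₂ → Prop} {i : Fin n} {j : Fin m} {c : Fin 3}

open Classical in
noncomputable def slotsBefore (r : Vtx n m s₁ s₂ → Vtx n m s₁ s₂ → Prop) (i : Fin n)
    (c : Fin 3) (j : Fin m) : Finset (Fin 6) :=
  {t | Before r (mset (slotMod i c t)) (mset (.T j))}

lemma LaidOut.mem_slotsBefore_iff (hr : IsStrictTotalOrder _ r) (hs₁ : 0 < s₁)
    (hs₂ : 0 < s₂) (hc : LaidOut r i c) (t : Fin 6) :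
    t ∈ slotsBefore r i c j ↔ (t : ℕ) < #(slotsBefore r i c j) := by
  refine mem_iff_lt_card_of_downward_closed _ (fun t ht t' ht' => ?_) t
  simp only [slotsBefore, mem_filter, mem_univ, true_and] at ht ⊢
  rcases ht'.lt_or_eq with ht' | rfl
  · exact (hc t' t ht').trans hr ht (mset_nonempty hs₁ hs₂ _)
  · exact ht

lemma LaidOut.before_T (hr : IsStrictTotalOrder _ r) (hs₁ : 0 < s₁) (hs₂ : 0 < s₂)
    (hc : LaidOut r i c) {t : Fin 6} (ht : (t : ℕ) < #(slotsBefore r i c j)) :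
    Before r (mset (slotMod i c t)) (mset (.T j)) := by
  simpa [slotsBefore] using (hc.mem_slotsBefore_iff hr hs₁ hs₂ t).mpr ht

lemma LaidOut.T_before (hr : IsStrictTotalOrder _ r) (hs₁ : 0 < s₁) (hs₂ : 0 < s₂)
    (hstr : Structured r) (hc : LaidOut r i c) {t : Fin 6}
    (ht : ¬ (t : ℕ) < #(slotsBefore r i c j)) :
    Before r (mset (.T j)) (mset (slotMod i c t)) := by
  have hdisj : Disjoint (mset (slotMod i c t)) (mset (.T j) : Set (Vtx n m s₁ s₂)) :=
    Set.disjoint_left.mpr fun v hv hv' => groupMod_ne_T _ (hv.symm.trans hv')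
  refine (before_or_before_of_contig hr (hstr.1 _) (hstr.1 _) hdisj).resolve_left fun h => ht ?_
  exact (hc.mem_slotsBefore_iff hr hs₁ hs₂ t).mp (by simpa [slotsBefore] using h)

/-- Oriented so that it is a backward pair whenever `t` is a backward slot. -/
def clausePair (i : Fin n) (c : Fin 3) (j : Fin m) (k : ℕ) (t : Fin 6) :
    ModName n m × ModName n m :=
  if (t : ℕ) < k then (.T j, slotMod i c t) else (slotMod i c t, .T j)

lemma clausePair_injective (i : Fin n) (c : Fin 3) (j : Fin m) (k : ℕ) :
    Function.Injective (clausePair i c j k) := by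
  intro t t' h
  unfold clausePair at h
  split_ifs at h <;> simp only [Prod.mk.injEq] at h
  · exact slotMod_injective c h.2
  · exact absurd h.1.symm (groupMod_ne_T _)
  · exact absurd h.1 (groupMod_ne_T _)
  · exact slotMod_injective c h.1

lemma LaidOut.isBackwardPair_clausePair (hr : IsStrictTotalOrder _ r) (hs₁ : 0 < s₁)
    (hs₂ : 0 < s₂) (hstr : Structured r) (hc : LaidOut r i c) {t : Fin 6}
    (ht : t ∈ backwardSlots (occ i j) c #(slotsBefore r i c j)) :
    IsBackwardPair occ r (clausePair i c j #(slotsBefore r i c j) t) := by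
  simp only [backwardSlots, mem_filter, mem_univ, true_and] at ht
  unfold clausePair
  split_ifs at ht ⊢ with hlt
  · refine ⟨(groupMod_ne_T _).symm,
      Or.inr (Or.inr (Or.inl ⟨j, i, rfl, grp?_groupMod _, ?_⟩)), hc.before_T hr hs₁ hs₂ hlt⟩
    rwa [slotMod, rk_groupMod]
  · refine ⟨groupMod_ne_T _, Or.inr (Or.inr (Or.inr ⟨i, j, grp?_groupMod _, rfl, ?_⟩)),
      hc.T_before hr hs₁ hs₂ hstr hlt⟩
    rwa [slotMod, rk_groupMod]

end Clause

section Count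

variable {n m s₁ s₂ : ℕ} {occ : Fin n → Fin m → Option Bool}
  {r : Vtx n m s₁ s₂ → Vtx n m s₁ s₂ → Prop}

noncomputable def backwardCount (occ : Fin n → Fin m → Option Bool)
    (r : Vtx n m s₁ s₂ → Vtx n m s₁ s₂ → Prop) (c : Fin n → Fin 3) (i : Fin n) (j : Fin m) :
    ℕ :=
  #(backwardSlots (occ i j) (c i) #(slotsBefore r i (c i) j))

lemma two_le_backwardCount (occ : Fin n → Fin m → Option Bool)
    (r : Vtx n m s₁ s₂ → Vtx n m s₁ s₂ → Prop) (c : Fin n → Fin 3) (i : Fin n) (j : Fin m) :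
    2 ≤ backwardCount occ r c i j ∧
      (3 ≤ backwardCount occ r c i j ∨ occ i j = some (decide (c i = 0)) ∧
        0 < #(slotsBefore r i (c i) j) ∧ #(slotsBefore r i (c i) j) < 6) :=
  two_le_card_backwardSlots (occ i j) (c i)
    ⟨#(slotsBefore r i (c i) j),
      Nat.lt_succ_of_le ((card_le_univ _).trans_eq (Fintype.card_fin 6))⟩

lemma LaidOut.not_inside_two_groups (hr : IsStrictTotalOrder _ r) (hs₁ : 0 < s₁)
    (hs₂ : 0 < s₂) (hstr : Structured r) {i i' : Fin n} {c c' : Fin 3} {j : Fin m}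
    (hc : LaidOut r i c) (hc' : LaidOut r i' c') (hii' : i < i')
    (hlast : #(slotsBefore r i c j) < 6) (hfirst : 0 < #(slotsBefore r i' c' j)) : False := by
  have hT : Before r (mset (.T j)) (mset (slotMod i c 5)) :=
    hc.T_before hr hs₁ hs₂ hstr (t := 5) (Nat.not_lt.mpr (Nat.le_of_lt_succ hlast))
  have hT' : Before r (mset (slotMod i' c' 0)) (mset (.T j)) := hc'.before_T hr hs₁ hs₂ hfirst
  have hgrp : Before r (mset (slotMod i c 5)) (mset (slotMod i' c' 0)) :=
    fun u hu v hv => hstr.2.1 i i' hii' u (mset_slotMod_subset_gset _ _ hu) v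
      (mset_slotMod_subset_gset _ _ hv)
  exact (hT.trans hr hgrp (mset_nonempty hs₁ hs₂ _)).not_before hr (mset_nonempty hs₁ hs₂ _)
    (mset_nonempty hs₁ hs₂ _) hT'

lemma sum_backwardCount_le (hr : IsStrictTotalOrder _ r) (hs₁ : 0 < s₁) (hs₂ : 0 < s₂)
    (hstr : Structured r) {c : Fin n → Fin 3} (hc : ∀ i, LaidOut r i (c i)) (j : Fin m) :
    3 * n - 1 ≤ ∑ i, backwardCount occ r c i j := by
  have h := three_mul_card_sub_one_le_sum (fun i => backwardCount occ r c i j)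
    (fun i => (two_le_backwardCount occ r c i j).1) fun i i' hne => by
      by_contra! hlt
      obtain ⟨-, hi⟩ := (two_le_backwardCount occ r c i j).2.resolve_left (by omega)
      obtain ⟨-, hi'⟩ := (two_le_backwardCount occ r c i' j).2.resolve_left (by omega)
      rcases hne.lt_or_gt with h | h
      · exact (hc i).not_inside_two_groups hr hs₁ hs₂ hstr (hc i') h hi.2 hi'.1
      · exact (hc i').not_inside_two_groups hr hs₁ hs₂ hstr (hc i) h hi'.2 hi.1
  rwa [Fintype.card_fin] at h

lemma three_mul_le_sum_backwardCount (r : Vtx n m s₁ s₂ → Vtx n m s₁ s₂ → Prop)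
    {c : Fin n → Fin 3} {j : Fin m} (hj : ∀ i, occ i j ≠ some (decide (c i = 0))) :
    3 * n ≤ ∑ i, backwardCount occ r c i j := by
  have h := card_nsmul_le_sum univ (fun i => backwardCount occ r c i j) 3 fun i _ =>
    (two_le_backwardCount occ r c i j).2.resolve_right fun h => hj i h.1
  simpa [mul_comm] using h

lemma sum_sum_backwardCount_le (hr : IsStrictTotalOrder _ r) (hs₁ : 0 < s₁) (hs₂ : 0 < s₂)
    (hstr : Structured r) (hn : 0 < n) {c : Fin n → Fin 3} (hc : ∀ i, LaidOut r i (c i))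
    {j₀ : Fin m} (hj₀ : ∀ i, occ i j₀ ≠ some (decide (c i = 0))) :
    (3 * n - 1) * m + 1 ≤ ∑ j, ∑ i, backwardCount occ r c i j := by
  have h := sum_lt_sum (s := univ) (f := fun _ => 3 * n - 1)
    (g := fun j => ∑ i, backwardCount occ r c i j)
    (fun j _ => sum_backwardCount_le hr hs₁ hs₂ hstr hc j)
    ⟨j₀, mem_univ _, by have := three_mul_le_sum_backwardCount r hj₀; omega⟩
  simpa [mul_comm] using h

end Count

section Decomposition

variable {n m s₁ s₂ : ℕ} {occ : Fin n → Fin m → Option Bool}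
  {r : Vtx n m s₁ s₂ → Vtx n m s₁ s₂ → Prop} {i : Fin n} {j : Fin m} {c : Fin 3}

/-- Classifies a pair of modules as lying inside group `i` (`inl i`) or joining `T_j` and
group `i` (`inr (i, j)`). -/
def pairKind (p : ModName n m × ModName n m) : Option (Fin n ⊕ Fin n × Fin m) :=
  match grp? p.1, grp? p.2, clause? p.1, clause? p.2 with
  | some i, some i', _, _ => if i = i' then some (.inl i) else none
  | some i, _, _, some j => some (.inr (i, j))
  | _, some i, some j, _ => some (.inr (i, j))
  | _, _, _, _ => none

lemma pairKind_clausePair (k : ℕ) (t : Fin 6) :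
    pairKind (clausePair i c j k t) = some (.inr (i, j)) := by
  unfold clausePair
  split_ifs <;> simp only [pairKind, slotMod, grp?_groupMod, clause?_groupMod] <;> rfl

/-- `D_i, E_i, F_i` form a cyclic triangle, so in each layout the arcs from the last of them to
the first point backwards. -/
lemma LaidOut.isBackwardPair_last_first (hc : LaidOut r i c) :
    IsBackwardPair occ r (slotMod i c 5, slotMod i c 3) := by
  refine ⟨fun h => by simpa using slotMod_injective c h,
    Or.inl ⟨i, i, grp?_groupMod _, grp?_groupMod _, Or.inr ⟨rfl, ?_⟩⟩, hc 3 5 (by decide)⟩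
  simp only [slotMod, rk_groupMod]
  fin_cases c <;> decide

open Classical in
lemma LaidOut.sq_le_sum_inl (hc : LaidOut r i c) :
    s₁ ^ 2 ≤ ∑ p ∈ {p | IsBackwardPair occ r p} with pairKind p = some (.inl i),
      msize n m s₁ s₂ p.1 * msize n m s₁ s₂ p.2 := by
  refine le_trans ?_ (single_le_sum (fun _ _ => Nat.zero_le _)
    (mem_filter.mpr ⟨mem_filter.mpr ⟨mem_univ _, hc.isBackwardPair_last_first⟩, ?_⟩))
  · exact sq s₁ ▸ Nat.mul_le_mul (le_msize_groupMod _) (le_msize_groupMod _)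
  · simp [pairKind, slotMod, grp?_groupMod]

lemma mul_le_msize_mul_msize_clausePair (k : ℕ) (t : Fin 6) :
    s₁ * s₂ ≤ msize n m s₁ s₂ (clausePair i c j k t).1 *
      msize n m s₁ s₂ (clausePair i c j k t).2 := by
  have h := le_msize_groupMod (s₁ := s₁) (s₂ := s₂) (i := i) (m := m) (slotRank c t)
  unfold clausePair
  split_ifs
  · exact mul_comm s₁ s₂ ▸ Nat.mul_le_mul_left s₂ h
  · exact Nat.mul_le_mul_right s₂ h

open Classical in
lemma LaidOut.card_mul_le_sum_inr (hr : IsStrictTotalOrder _ r) (hs₁ : 0 < s₁)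
    (hs₂ : 0 < s₂) (hstr : Structured r) (hc : LaidOut r i c) :
    #(backwardSlots (occ i j) c #(slotsBefore r i c j)) * (s₁ * s₂) ≤
      ∑ p ∈ {p | IsBackwardPair occ r p} with pairKind p = some (.inr (i, j)),
        msize n m s₁ s₂ p.1 * msize n m s₁ s₂ p.2 := by
  set k := #(slotsBefore r i c j)
  set pairs := (backwardSlots (occ i j) c k).image (clausePair i c j k)
  calc #(backwardSlots (occ i j) c k) * (s₁ * s₂) = #pairs * (s₁ * s₂) := by
        rw [card_image_of_injective _ (clausePair_injective i c j k)]
    _ ≤ ∑ p ∈ pairs, msize n m s₁ s₂ p.1 * msize n m s₁ s₂ p.2 := by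
        rw [← smul_eq_mul]
        refine card_nsmul_le_sum _ _ _ fun p hp => ?_
        obtain ⟨t, -, rfl⟩ := mem_image.mp hp
        exact mul_le_msize_mul_msize_clausePair k t
    _ ≤ _ := by
        refine sum_le_sum_of_subset fun p hp => ?_
        obtain ⟨t, ht, rfl⟩ := mem_image.mp hp
        simp only [mem_filter, mem_univ, true_and]
        exact ⟨hc.isBackwardPair_clausePair hr hs₁ hs₂ hstr ht, pairKind_clausePair k t⟩

lemma mul_sq_add_sum_backwardCount_mul_le (hr : IsStrictTotalOrder _ r) (hs₁ : 0 < s₁)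
    (hs₂ : 0 < s₂) (hstr : Structured r) {c : Fin n → Fin 3} (hc : ∀ i, LaidOut r i (c i)) :
    n * s₁ ^ 2 + (∑ j, ∑ i, backwardCount occ r c i j) * (s₁ * s₂) ≤
      (fasSet (arc occ) r).ncard := by
  classical
  let weightOfKind (κ : Option (Fin n ⊕ Fin n × Fin m)) : ℕ :=
    ∑ p ∈ {p | IsBackwardPair occ r p} with pairKind p = κ,
      msize n m s₁ s₂ p.1 * msize n m s₁ s₂ p.2
  calc n * s₁ ^ 2 + (∑ j, ∑ i, backwardCount occ r c i j) * (s₁ * s₂)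
      = ∑ i : Fin n, s₁ ^ 2 +
          ∑ q : Fin n × Fin m, backwardCount occ r c q.1 q.2 * (s₁ * s₂) := by
        simp only [sum_const, card_univ, Fintype.card_fin, smul_eq_mul, sum_mul,
          Fintype.sum_prod_type]
        rw [sum_comm]
    _ ≤ ∑ i, weightOfKind (some (.inl i)) + ∑ q, weightOfKind (some (.inr q)) :=
        add_le_add (sum_le_sum fun i _ => (hc i).sq_le_sum_inl)
          (sum_le_sum fun q _ => (hc q.1).card_mul_le_sum_inr hr hs₁ hs₂ hstr)
    _ ≤ ∑ κ, weightOfKind κ := by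
        rw [Fintype.sum_option, Fintype.sum_sum_type]
        exact Nat.le_add_left _ _
    _ = ∑ p with IsBackwardPair occ r p, msize n m s₁ s₂ p.1 * msize n m s₁ s₂ p.2 :=
        sum_fiberwise _ _ _
    _ ≤ (fasSet (arc occ) r).ncard := sum_backwardPair_le_ncard_fasSet

end Decomposition

lemma satClause_of_occ_eq {n m : ℕ} {occ : Fin n → Fin m → Option Bool} {σ : Fin n → Bool}
    {i : Fin n} {j : Fin m} (h : occ i j = some (σ i)) : SatClause occ σ j := by
  refine ⟨i, ?_⟩
  cases hσ : σ i <;> simp_all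

theorem stmt13_general (n m s₁ s₂ : ℕ) (hn : 0 < n) (hs₁ : 0 < s₁) (hs₂ : 0 < s₂)
    (occ : Fin n → Fin m → Option Bool)
    (r : Vtx n m s₁ s₂ → Vtx n m s₁ s₂ → Prop) (hr : IsStrictTotalOrder (Vtx n m s₁ s₂) r)
    (hstr : Structured r)
    (σ : Fin n → Bool) (hσ : Extracted r σ)
    (hfals : ∃ j : Fin m, ¬ SatClause occ σ j) :
    n * s₁ ^ 2 + (3 * n - 1) * m * s₁ * s₂ + s₁ * s₂ ≤ (fasSet (arc occ) r).ncard := by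
  choose c hc using hstr.exists_laidOut hr hs₁ hs₂
  have hσc : ∀ i, σ i = decide (c i = 0) := fun i =>
    Bool.eq_iff_iff.mpr ((hσ i).trans (((hc i).eq_zero_iff hr hs₁ hs₂).symm.trans
      (decide_eq_true_iff).symm))
  obtain ⟨j₀, hj₀⟩ := hfals
  have hfalse : ∀ i, occ i j₀ ≠ some (decide (c i = 0)) := fun i h =>
    hj₀ (satClause_of_occ_eq (h.trans (congrArg some (hσc i).symm)))
  calc n * s₁ ^ 2 + (3 * n - 1) * m * s₁ * s₂ + s₁ * s₂
      = n * s₁ ^ 2 + ((3 * n - 1) * m + 1) * (s₁ * s₂) := by ring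
    _ ≤ n * s₁ ^ 2 + (∑ j, ∑ i, backwardCount occ r c i j) * (s₁ * s₂) := by
        gcongr
        exact sum_sum_backwardCount_le hr hs₁ hs₂ hstr hn hc hfalse
    _ ≤ (fasSet (arc occ) r).ncard := mul_sq_add_sum_backwardCount_mul_le hr hs₁ hs₂ hstr hc

/-- If a structured order's extracted assignment falsifies some clause of `φ`, then its
implied feedback arc set has size at least `n·s₁² + (3n−1)m·s₁·s₂ + s₁·s₂`. -/
theorem stmt13 (n m s₁ s₂ : ℕ) (hn : 0 < n) (hm : 0 < m) (hs₁ : 0 < s₁) (hs₂ : 0 < s₂)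
    (occ : Fin n → Fin m → Option Bool)
    (h3lit : ∀ j : Fin m, ({i : Fin n | occ i j ≠ none}).ncard ≤ 3)
    (hallF : ∀ j : Fin m, ∃ i : Fin n, occ i j = some false)
    (r : Vtx n m s₁ s₂ → Vtx n m s₁ s₂ → Prop) (hr : IsStrictTotalOrder (Vtx n m s₁ s₂) r)
    (hstr : Structured r)
    (σ : Fin n → Bool) (hσ : Extracted r σ)
    (hfals : ∃ j : Fin m, ¬ SatClause occ σ j) :
    n * s₁ ^ 2 + (3 * n - 1) * m * s₁ * s₂ + s₁ * s₂ ≤ (fasSet (arc occ) r).ncard :=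
  stmt13_general n m s₁ s₂ hn hs₁ hs₂ occ r hr hstr σ hσ hfals
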